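/- Let k > 0 real, C = C_R + iC_I with C_R > 0, C_I < 0. With coefficients g₋₊ = g₊₋ = E₀(1+N)/4 and g₋₋ = g₊₊ = E₀(1−N)/4 where N = c₀/C is non-real and E₀ ∈ ℝ, E₀ ≠ 0, the field E_x(t,z) = g₋₊ e^{ik(−Ct+z)} + g₋₋ e^{ik(−Ct−z)} + g₊₋ e^{ik(Ct−z)} + g₊₊ e^{ik(Ct+z)} is not real-valued for all (t,z); i.e., there exist t, z with Im(E_x(t,z)) ≠ 0. -/

import Mathlib

/-!
At `z = 0` the two pairs of counter-propagating waves combine, the `N`-dependent parts cancelling,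
into the standing wave `E₀ cos (k C t)`. Since `Im cos w = - sin (Re w) sinh (Im w)`, choosing `t`
with `k C_R t = π / 2` leaves the imaginary part `-E₀ sinh (k C_I t)`, which vanishes only if the
medium is lossless (`C_I = 0`).
-/

open Complex

lemma Complex.im_cos (w : ℂ) : (cos w).im = -(Real.sin w.re * Real.sinh w.im) := by
  rw [cos_eq]
  simp [← ofReal_cos, ← ofReal_sin, ← ofReal_cosh, ← ofReal_sinh]

lemma Complex.exists_im_cos_mul_ofReal_ne_zero {a : ℂ} (hre : a.re ≠ 0) (him : a.im ≠ 0) :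
    ∃ t : ℝ, (cos (a * t)).im ≠ 0 := by
  refine ⟨Real.pi / (2 * a.re), ?_⟩
  have hphase : (a * (Real.pi / (2 * a.re) : ℝ)).re = Real.pi / 2 := by
    rw [re_mul_ofReal]
    field_simp
  have hdamp : (a * (Real.pi / (2 * a.re) : ℝ)).im ≠ 0 := by
    rw [im_mul_ofReal]
    exact mul_ne_zero him (div_ne_zero Real.pi_ne_zero (mul_ne_zero two_ne_zero hre))
  rw [im_cos, hphase, Real.sin_pi_div_two, one_mul, neg_ne_zero]
  exact Real.sinh_ne_zero.mpr hdamp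

lemma standing_wave_eq_cos (E N κ w : ℂ) :
    E * (1 + N) / 4 * exp (I * κ * (-w + 0)) + E * (1 - N) / 4 * exp (I * κ * (-w - 0))
      + E * (1 + N) / 4 * exp (I * κ * (w - 0)) + E * (1 - N) / 4 * exp (I * κ * (w + 0))
      = E * cos (κ * w) := by
  rw [cos, add_zero, sub_zero, sub_zero, add_zero]
  ring_nf

theorem constant_complex_CR_field_not_real_general
    (E₀ k C_R C_I : ℝ) (C N : ℂ)
    (hE₀ : E₀ ≠ 0) (hk : 0 < k)
    (hC : C = (C_R : ℂ) + (C_I : ℂ) * Complex.I) (hCR : 0 < C_R) (hCI : C_I < 0) :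
    ∃ t z : ℝ,
      (((E₀ : ℂ) * (1 + N) / 4) * Complex.exp (Complex.I * (k : ℂ) * (-(C * (t : ℂ)) + (z : ℂ)))
        + ((E₀ : ℂ) * (1 - N) / 4) * Complex.exp (Complex.I * (k : ℂ) * (-(C * (t : ℂ)) - (z : ℂ)))
        + ((E₀ : ℂ) * (1 + N) / 4) * Complex.exp (Complex.I * (k : ℂ) * (C * (t : ℂ) - (z : ℂ)))
        + ((E₀ : ℂ) * (1 - N) / 4) * Complex.exp (Complex.I * (k : ℂ) * (C * (t : ℂ) + (z : ℂ)))).im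
        ≠ 0 := by
  have hre : ((k : ℂ) * C).re ≠ 0 := by simpa [hC] using ⟨hk.ne', hCR.ne'⟩
  have him : ((k : ℂ) * C).im ≠ 0 := by simpa [hC] using ⟨hk.ne', hCI.ne⟩
  obtain ⟨t, ht⟩ := exists_im_cos_mul_ofReal_ne_zero hre him
  refine ⟨t, 0, ?_⟩
  rw [ofReal_zero, standing_wave_eq_cos, ← mul_assoc, im_ofReal_mul]
  exact mul_ne_zero hE₀ ht

theorem constant_complex_CR_field_not_real
    (E₀ k C_R C_I c₀ : ℝ) (C N : ℂ)
    (hE₀ : E₀ ≠ 0) (hk : 0 < k) (hc₀ : 0 < c₀)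
    (hC : C = (C_R : ℂ) + (C_I : ℂ) * Complex.I) (hCR : 0 < C_R) (hCI : C_I < 0)
    (hN : N = (c₀ : ℂ) / C) (hNim : N.im ≠ 0) :
    ∃ t z : ℝ,
      (((E₀ : ℂ) * (1 + N) / 4) * Complex.exp (Complex.I * (k : ℂ) * (-(C * (t : ℂ)) + (z : ℂ)))
        + ((E₀ : ℂ) * (1 - N) / 4) * Complex.exp (Complex.I * (k : ℂ) * (-(C * (t : ℂ)) - (z : ℂ)))
        + ((E₀ : ℂ) * (1 + N) / 4) * Complex.exp (Complex.I * (k : ℂ) * (C * (t : ℂ) - (z : ℂ)))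
        + ((E₀ : ℂ) * (1 - N) / 4) * Complex.exp (Complex.I * (k : ℂ) * (C * (t : ℂ) + (z : ℂ)))).im
        ≠ 0 :=
  constant_complex_CR_field_not_real_general E₀ k C_R C_I C N hE₀ hk hC hCR hCI
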